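/- (Myhill-Nerode with advice, easy direction) If L ⊆ Σ* is regular with advice, then there exists k ∈ ℕ such that for every n ≥ 0, the relation ≡_{L,n} (the Myhill-Nerode congruence of L restricted to Σⁿ) has at most k equivalence classes. -/

import Mathlib

open Classical

/-- The run of an automaton with advice. -/
def advRun {Q S Γ : Type*} (δ : Q → Γ → S → Q) (A : ℕ → Γ) : Q → ℕ → List S → Q
  | q, _, [] => q
  | q, n, a :: w => advRun δ A (δ q (A n) a) (n + 1) w

/-- The language accepted by an automaton with advice. -/
def advAccepts {Q S Γ : Type*} (δ : Q → Γ → S → Q) (A : ℕ → Γ) (q0 : Q) (F : Set Q) :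
    Set (List S) :=
  {w | advRun δ A q0 0 w ∈ F}

/-- `L` is regular with (some) advice. -/
def RegularWithSomeAdvice {S : Type*} (L : Set (List S)) : Prop :=
  ∃ (Γ : Type) (_ : Fintype Γ) (A : ℕ → Γ) (Q : Type) (_ : Fintype Q)
    (δ : Q → Γ → S → Q) (q0 : Q) (F : Set Q), advAccepts δ A q0 F = L

/-- The Myhill-Nerode congruence of a language `L`. -/
def NerodeEq {S : Type*} (L : Set (List S)) (x y : List S) : Prop :=
  ∀ z : List S, x ++ z ∈ L ↔ y ++ z ∈ L

/-- `≡_{L,n}` has at most `k` equivalence classes: there are at most `k`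
representatives of length `n` covering all strings of length `n`. -/
def NerodeClassesLe {S : Type*} (L : Set (List S)) (n k : ℕ) : Prop :=
  ∃ R : Finset (List S), R.card ≤ k ∧ (∀ y ∈ R, y.length = n) ∧
    ∀ x : List S, x.length = n → ∃ y ∈ R, NerodeEq L x y

/-! The state reached after reading `x` of length `n` determines the `≡_{L,n}`-class of `x`:
the rest of the run reads the advice from position `n` on, whatever `x` was. Hence the number of
classes is bounded by the number of states, uniformly in `n`. -/

theorem advRun_append {Q S Γ : Type*} (δ : Q → Γ → S → Q) (A : ℕ → Γ) (q : Q) (n : ℕ)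
    (w z : List S) :
    advRun δ A q n (w ++ z) = advRun δ A (advRun δ A q n w) (n + w.length) z := by
  induction w generalizing q n with
  | nil => rfl
  | cons a w ih =>
    simp only [List.cons_append, advRun, List.length_cons]
    rw [ih, Nat.add_right_comm, Nat.add_assoc]

theorem nerodeEq_advAccepts_of_advRun_eq {Q S Γ : Type*} {δ : Q → Γ → S → Q} {A : ℕ → Γ}
    {q0 : Q} {F : Set Q} {x y : List S} (hlen : x.length = y.length)
    (hrun : advRun δ A q0 0 x = advRun δ A q0 0 y) :
    NerodeEq (advAccepts δ A q0 F) x y := by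
  intro z
  simp only [advAccepts, Set.mem_ofPred_eq, advRun_append, hrun, hlen]

theorem nerodeClassesLe_card_of_forall_eq_nerodeEq {S β : Type*} [Fintype β]
    (L : Set (List S)) (n : ℕ) (f : List S → β)
    (hf : ∀ x y, x.length = n → y.length = n → f x = f y → NerodeEq L x y) :
    NerodeClassesLe L n (Fintype.card β) := by
  set words : Set (List S) := {x | x.length = n}
  refine ⟨(Finset.univ.filter (· ∈ f '' words)).image (Function.invFunOn f words),
    Finset.card_image_le.trans (Finset.card_filter_le _ _), ?_, ?_⟩
  · intro y hy
    obtain ⟨b, hb, rfl⟩ := Finset.mem_image.mp hy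
    exact Function.invFunOn_mem (Finset.mem_filter.mp hb).2
  · intro x hx
    have hfx : f x ∈ f '' words := Set.mem_image_of_mem f hx
    refine ⟨Function.invFunOn f words (f x),
      Finset.mem_image_of_mem _ (Finset.mem_filter.mpr ⟨Finset.mem_univ _, hfx⟩), ?_⟩
    exact hf _ _ hx (Function.invFunOn_mem hfx) (Function.invFunOn_eq hfx).symm

/-- Easy direction of Myhill-Nerode with advice: a language regular with advice
has a uniform bound on the number of classes of `≡_{L,n}`. -/
theorem regular_with_advice_implies_bounded_nerode {S : Type*} (L : Set (List S))
    (h : RegularWithSomeAdvice L) :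
    ∃ k : ℕ, ∀ n : ℕ, NerodeClassesLe L n k := by
  obtain ⟨Γ, _, A, Q, _, δ, q0, F, rfl⟩ := h
  refine ⟨Fintype.card Q, fun n => ?_⟩
  exact nerodeClassesLe_card_of_forall_eq_nerodeEq _ n (advRun δ A q0 0)
    fun x y hx hy hxy => nerodeEq_advAccepts_of_advRun_eq (hx.trans hy.symm) hxy
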